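/- Let Cov_Fib[ℓ] denote the length of the shortest cover of the length-ℓ prefix of the infinite Fibonacci word Fib. Then: Cov_Fib[1] = 1, Cov_Fib[2] = 2, Cov_Fib[F_k] = 3 for every odd k ≥ 3, and Cov_Fib[F_k] = 5 for every even k ≥ 4. -/

import Mathlib

section Defs

variable {α : Type*}

/-- `C` occurs in `T` at starting position `i`. -/
def OccursAt (C T : List α) (i : ℕ) : Prop :=
  i + C.length ≤ T.length ∧ (T.drop i).take C.length = C

/-- `C` is a cover of `T`: `C` occurs in `T` and every position of `T`
lies within an occurrence of `C`. -/
def IsCover (C T : List α) : Prop :=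
  (∃ i, OccursAt C T i) ∧
    ∀ q, q < T.length → ∃ i, OccursAt C T i ∧ i ≤ q ∧ q < i + C.length

/-- A border of `T` is both a prefix and a suffix of `T`. -/
def IsBorder (B T : List α) : Prop := B <+: T ∧ B <:+ T

/-- `p` is a period of `U`: `U[i] = U[i+p]` for all `0 ≤ i < |U| - p`. -/
def IsPeriod (p : ℕ) (U : List α) : Prop :=
  0 < p ∧ ∀ i, i + p < U.length → U[i]? = U[i + p]?

/-- `U` is aperiodic: its smallest period `p` satisfies `2p > |U|`
(equivalently, every period `p` of `U` satisfies `2p > |U|`). -/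
def StrAperiodic (U : List α) : Prop := ∀ p, IsPeriod p U → U.length < 2 * p

/-- A nonempty string `X` is primitive if `X = Y^t` implies `t = 1`. -/
def StrPrimitive (X : List α) : Prop :=
  X ≠ [] ∧ ∀ (Y : List α) (t : ℕ), X = (List.replicate t Y).flatten → t = 1

/-- A string is superprimitive if it has no proper cover. -/
def Superprimitive (T : List α) : Prop :=
  ¬ ∃ C : List α, IsCover C T ∧ C.length < T.length

/-- The length of the shortest cover of `T`. -/
noncomputable def covLen (T : List α) : ℕ :=
  sInf {c | ∃ C : List α, C.length = c ∧ IsCover C T}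

/-- `{a, a+p, ..., a+(t-1)p}` is a maximal arithmetic progression with
difference `p` inside the set `S`. -/
def MaxProg (S : Set ℕ) (p a t : ℕ) : Prop :=
  0 < t ∧ (∀ r, r < t → a + r * p ∈ S) ∧ (∀ b, b + p = a → b ∉ S) ∧ a + t * p ∉ S

end Defs

/-- Fibonacci strings over `Bool` (`true` = a, `false` = b):
`Fib_0 = b`, `Fib_1 = a`, `Fib_m = Fib_{m-1} Fib_{m-2}`. -/
def fibWord : ℕ → List Bool
  | 0 => [false]
  | 1 => [true]
  | (m + 2) => fibWord (m + 1) ++ fibWord m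

/-- Fibonacci numbers `F_k = |Fib_k|`: `F_0 = F_1 = 1`, `F_2 = 2`, `F_3 = 3`, ... -/
def F (k : ℕ) : ℕ := (fibWord k).length

/-- The `n`-th letter of the infinite Fibonacci word (each `Fib_m`, `m ≥ 1`,
is a prefix of the infinite word, and `F_{n+2} > n`). -/
def fibInf (n : ℕ) : Bool := (fibWord (n + 2)).getD n false

/-- The length-`ℓ` prefix `Fib[0..ℓ)` of the infinite Fibonacci word. -/
def fibPrefix (ℓ : ℕ) : List Bool := (List.range ℓ).map fibInf

/-- `Cov_Fib[ℓ]`: the length of the shortest cover of `Fib[0..ℓ)`. -/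
noncomputable def covFib (ℓ : ℕ) : ℕ := covLen (fibPrefix ℓ)


/-!
A cover of `T` is a border of `T`, and it covers every border of `T` that is at least as
long as itself. Hence a superprimitive cover of `T` is a shortest one. The words
`Fib_1 = a`, `Fib_2 = ab`, `Fib_3 = aba` and `Fib_4 = abaab` are superprimitive, and for
`c ≥ 3` the word `Fib_c` covers `Fib_{c+2j}`, by induction along `Fib_{n+2} = Fib_{n+1} Fib_n`:
covers survive concatenation, and `Fib_{c-1}` may be prepended to any word covered by `Fib_c`,
since `Fib_c = Fib_{c-1} Fib_{c-2}` with `Fib_{c-2}` a prefix of `Fib_{c-1}`.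
-/

section Covers

variable {α : Type*} {B C P T U V X Y : List α} {i : ℕ}

instance [DecidableEq α] (C T : List α) (i : ℕ) : Decidable (OccursAt C T i) :=
  inferInstanceAs (Decidable (_ ∧ _))

theorem occursAt_zero_iff : OccursAt C T 0 ↔ C <+: T := by
  rw [OccursAt, List.drop_zero, zero_add]
  exact ⟨fun h => h.2 ▸ List.take_prefix _ _,
    fun h => ⟨h.length_le, (List.prefix_iff_eq_take.1 h).symm⟩⟩

theorem OccursAt.append_right (h : OccursAt C X i) (Y : List α) : OccursAt C (X ++ Y) i := by
  obtain ⟨hle, heq⟩ := h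
  refine ⟨by simp; omega, ?_⟩
  rw [List.drop_append_of_le_length (by omega),
    List.take_append_of_le_length (by simp; omega), heq]

theorem OccursAt.append_left (h : OccursAt C X i) (Y : List α) :
    OccursAt C (Y ++ X) (Y.length + i) := by
  obtain ⟨hle, heq⟩ := h
  exact ⟨by simp; omega, by rw [List.drop_length_add_append, heq]⟩

theorem OccursAt.of_append_right (h : OccursAt C (U ++ V) i) (hi : i + C.length ≤ U.length) :
    OccursAt C U i := by
  obtain ⟨-, heq⟩ := h
  refine ⟨hi, ?_⟩
  rwa [List.drop_append_of_le_length (by omega),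
    List.take_append_of_le_length (by simp; omega)] at heq

theorem isCover_self : IsCover T T := by
  have h0 : OccursAt T T 0 := occursAt_zero_iff.2 (List.prefix_refl T)
  exact ⟨⟨0, h0⟩, fun q hq => ⟨0, h0, Nat.zero_le q, by omega⟩⟩

theorem IsCover.append (hX : IsCover C X) (hY : IsCover C Y) : IsCover C (X ++ Y) := by
  obtain ⟨⟨i, hi⟩, hcovX⟩ := hX
  refine ⟨⟨i, hi.append_right Y⟩, fun q hq => ?_⟩
  rw [List.length_append] at hq
  by_cases hqX : q < X.length
  · obtain ⟨j, hj, hjq, hqj⟩ := hcovX q hqX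
    exact ⟨j, hj.append_right Y, hjq, hqj⟩
  · obtain ⟨j, hj, hjq, hqj⟩ := hY.2 (q - X.length) (by omega)
    exact ⟨X.length + j, hj.append_left X, by omega, by omega⟩

theorem IsCover.prepend (hX : IsCover C X) (hP : P.length ≤ C.length) (hC : C <+: P ++ X) :
    IsCover C (P ++ X) := by
  have h0 := occursAt_zero_iff.2 hC
  refine ⟨⟨0, h0⟩, fun q hq => ?_⟩
  rw [List.length_append] at hq
  by_cases hqC : q < C.length
  · exact ⟨0, h0, Nat.zero_le q, by omega⟩
  · obtain ⟨j, hj, hjq, hqj⟩ := hX.2 (q - P.length) (by omega)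
    exact ⟨P.length + j, hj.append_left P, by omega, by omega⟩

theorem IsCover.isPrefix (h : IsCover C T) : C <+: T := by
  rcases eq_or_ne T [] with rfl | hT
  · obtain ⟨⟨i, hle, -⟩, -⟩ := h
    simp_all
  · obtain ⟨i, hi, hi0, -⟩ := h.2 0 (List.length_pos_iff.2 hT)
    rw [Nat.le_zero.1 hi0] at hi
    exact occursAt_zero_iff.1 hi

theorem IsCover.isSuffix (h : IsCover C T) : C <:+ T := by
  rcases eq_or_ne T [] with rfl | hT
  · obtain ⟨⟨i, hle, -⟩, -⟩ := h
    simp_all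
  · obtain ⟨i, ⟨hle, heq⟩, hiq, hqi⟩ := h.2 (T.length - 1) (by simp [List.length_pos_iff, hT])
    rw [List.take_of_length_le (by simp; omega)] at heq
    exact heq ▸ List.drop_suffix i T

theorem IsCover.isBorder (h : IsCover C T) : IsBorder C T := ⟨h.isPrefix, h.isSuffix⟩

/-- Positions near the start of a border `B` are covered by occurrences lying inside `B`,
and the rest by the occurrence of `C` as a suffix of `B`. -/
theorem IsCover.isCover_of_isBorder (hC : IsCover C T) (hB : IsBorder B T)
    (hle : C.length ≤ B.length) : IsCover C B := by
  obtain ⟨hBpre, hBsuf⟩ := hB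
  have hpre : C <+: B := List.prefix_of_prefix_length_le hC.isPrefix hBpre hle
  obtain ⟨S, rfl⟩ : C <:+ B := List.suffix_of_suffix_length_le hC.isSuffix hBsuf hle
  have hsuf : OccursAt C (S ++ C) S.length := by
    simpa using (occursAt_zero_iff.2 (List.prefix_refl C)).append_left S
  obtain ⟨V, rfl⟩ := hBpre
  refine ⟨⟨0, occursAt_zero_iff.2 hpre⟩, fun q hq => ?_⟩
  rw [List.length_append] at hq hle
  by_cases hq' : q + C.length ≤ S.length + C.length
  · obtain ⟨j, hj, hjq, hqj⟩ := hC.2 q (by simp; omega)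
    exact ⟨j, hj.of_append_right (by simp; omega), hjq, hqj⟩
  · exact ⟨S.length, hsuf, by omega, by omega⟩

/-- Every cover of `T` is a border of `T`, so a cover shorter than `C` would cover `C`. -/
theorem covLen_eq_length_of_superprimitive (hC : IsCover C T) (hsp : Superprimitive C) :
    covLen T = C.length := by
  have hmem : C.length ∈ {c | ∃ D : List α, D.length = c ∧ IsCover D T} := ⟨C, rfl, hC⟩
  refine le_antisymm (Nat.sInf_le hmem) (le_csInf ⟨_, hmem⟩ ?_)
  rintro _ ⟨D, rfl, hD⟩
  by_contra! hlt
  exact hsp ⟨D, hD.isCover_of_isBorder hC.isBorder hlt.le, hlt⟩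

/-- A decidable form of superprimitivity. -/
theorem superprimitive_iff [DecidableEq α] :
    Superprimitive B ↔ ∀ d < B.length, ∃ q < B.length,
      ∀ i ≤ q, q < i + d → ¬ OccursAt (B.take d) B i := by
  constructor
  · intro hsp d hd
    by_contra! hcov
    obtain ⟨i, -, -, hi⟩ := hcov 0 (by omega)
    refine hsp ⟨B.take d, ⟨⟨i, hi⟩, fun q hq => ?_⟩, by simp; omega⟩
    obtain ⟨j, hjq, hqj, hj⟩ := hcov q hq
    exact ⟨j, hj, hjq, by simpa [Nat.min_eq_left hd.le] using hqj⟩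
  · rintro h ⟨C, hC, hlt⟩
    obtain ⟨q, hq, hmiss⟩ := h C.length hlt
    obtain ⟨j, hj, hjq, hqj⟩ := hC.2 q hq
    rw [← List.prefix_iff_eq_take.1 hC.isPrefix] at hmiss
    exact hmiss j hjq hqj hj

end Covers

section Fibonacci

theorem fibWord_add_two (k : ℕ) : fibWord (k + 2) = fibWord (k + 1) ++ fibWord k := rfl

theorem fibWord_ne_nil : ∀ k, fibWord k ≠ []
  | 0 | 1 => by simp [fibWord]
  | k + 2 => by simp [fibWord_add_two, fibWord_ne_nil (k + 1)]

theorem fibWord_prefix_add_one {k : ℕ} (hk : 1 ≤ k) : fibWord k <+: fibWord (k + 1) := by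
  obtain ⟨k, rfl⟩ := Nat.exists_eq_add_of_le' hk
  exact List.prefix_append _ _

theorem fibWord_prefix_of_le {k n : ℕ} (hk : 1 ≤ k) (hkn : k ≤ n) : fibWord k <+: fibWord n := by
  induction n, hkn using Nat.le_induction with
  | base => exact List.prefix_refl _
  | succ n hkn ih => exact ih.trans (fibWord_prefix_add_one (hk.trans hkn))

theorem lt_F_add_two : ∀ n, n < F (n + 2)
  | 0 | 1 => by decide
  | n + 2 => by
    have h1 : n + 1 < F (n + 3) := lt_F_add_two (n + 1)
    have h2 : 0 < F (n + 2) := List.length_pos_iff.2 (fibWord_ne_nil _)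
    have h3 : F (n + 4) = F (n + 3) + F (n + 2) := by simp [F, fibWord_add_two (n + 2)]
    show n + 2 < F (n + 4)
    omega

theorem fibPrefix_F {k : ℕ} (hk : 1 ≤ k) : fibPrefix (F k) = fibWord k := by
  refine List.ext_getElem (by simp [fibPrefix, F]) fun n hn hnk => ?_
  have hn2 : n < (fibWord (n + 2)).length := lt_F_add_two n
  simp only [fibPrefix, List.getElem_map, List.getElem_range, fibInf,
    List.getD_eq_getElem _ _ hn2]
  rcases le_total (n + 2) k with h | h
  · exact (fibWord_prefix_of_le (by omega) h).getElem hn2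
  · exact ((fibWord_prefix_of_le hk h).getElem hnk).symm

theorem IsCover.fibWord_append {m n : ℕ} (hn : m + 2 ≤ n) {X : List Bool}
    (hX : IsCover (fibWord (m + 3)) X) : IsCover (fibWord (m + 3)) (fibWord n ++ X) := by
  induction n using Nat.strong_induction_on generalizing X with
  | _ n ih =>
    rcases Nat.lt_or_ge n (m + 4) with hn' | hn'
    · obtain rfl | rfl : n = m + 2 ∨ n = m + 3 := by omega
      · refine hX.prepend (by simp [fibWord_add_two]) ?_
        obtain ⟨Y, rfl⟩ := hX.isPrefix
        rw [fibWord_add_two, List.append_assoc]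
        exact List.prefix_append_right_inj _ |>.2
          ((fibWord_prefix_add_one (by omega)).trans (List.prefix_append _ _))
      · exact isCover_self.append hX
    · obtain ⟨k, rfl⟩ := Nat.exists_eq_add_of_le' (show 2 ≤ n by omega)
      rw [fibWord_add_two k, List.append_assoc]
      exact ih (k + 1) (by omega) (by omega) (ih k (by omega) (by omega) hX)

theorem isCover_fibWord (m j : ℕ) : IsCover (fibWord (m + 3)) (fibWord (m + 3 + 2 * j)) := by
  induction j with
  | zero => exact isCover_self
  | succ j ih =>
    rw [show m + 3 + 2 * (j + 1) = m + 3 + 2 * j + 2 by ring, fibWord_add_two]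
    exact ih.fibWord_append (by omega)

theorem covFib_F_of_isCover {c k : ℕ} (hk : 1 ≤ k) (hcov : IsCover (fibWord c) (fibWord k))
    (hsp : Superprimitive (fibWord c)) : covFib (F k) = F c := by
  rw [covFib, fibPrefix_F hk, covLen_eq_length_of_superprimitive hcov hsp, F]

end Fibonacci

/-- `Cov_Fib[1] = 1`, `Cov_Fib[2] = 2`, `Cov_Fib[F_k] = 3` for odd `k ≥ 3`,
and `Cov_Fib[F_k] = 5` for even `k ≥ 4`. -/
theorem stmt6 :
    covFib 1 = 1 ∧ covFib 2 = 2 ∧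
    (∀ k, 3 ≤ k → Odd k → covFib (F k) = 3) ∧
    (∀ k, 4 ≤ k → Even k → covFib (F k) = 5) := by
  have superprimitive_fibWord : ∀ c ≤ 4, Superprimitive (fibWord c) := by
    intro c hc
    rw [superprimitive_iff]
    interval_cases c <;> decide
  refine ⟨covFib_F_of_isCover le_rfl isCover_self (superprimitive_fibWord 1 (by norm_num)),
    covFib_F_of_isCover (by norm_num) isCover_self (superprimitive_fibWord 2 (by norm_num)),
    fun k hk hodd => ?_, fun k hk heven => ?_⟩
  · obtain ⟨j, rfl⟩ : ∃ j, k = 0 + 3 + 2 * j := ⟨(k - 3) / 2, by grind⟩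
    exact covFib_F_of_isCover (by omega) (isCover_fibWord 0 j)
      (superprimitive_fibWord 3 (by norm_num))
  · obtain ⟨j, rfl⟩ : ∃ j, k = 1 + 3 + 2 * j := ⟨(k - 4) / 2, by grind⟩
    exact covFib_F_of_isCover (by omega) (isCover_fibWord 1 j) (superprimitive_fibWord 4 le_rfl)
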